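/- Let F be an Orlicz function with the Δ₂-condition, and suppose there exist a bounded monotone increasing function w: [1,∞) → ℝ and a constant C₀ such that F_t(x) ≤ C₀ F_s(x) + w(t) − w(s) for all 1 ≤ s ≤ t and 0 ≤ x ≤ 1. Then there exist constants C₂ > 1 and r > 0 such that for every 0 < x ≤ 1, any collection 1 ≤ a₁ < b₁ ≤ a₂ < b₂ ≤ ⋯ ≤ a_n < b_n with F_{b_k}(x) > 2C₀ F_{a_k}(x) for all k satisfies n ≤ C₂ x^{−r}. -/

import Mathlib

open Set

/-- `F_t(x) = F(tx)/F(t)`. -/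
noncomputable def Ft (F : ℝ → ℝ) (t x : ℝ) : ℝ := F (t * x) / F t

/-- A chain `1 ≤ a₁ < b₁ ≤ a₂ < b₂ ≤ ⋯ ≤ a_n < b_n`. -/
def OrlChain (a b : ℕ → ℝ) (n : ℕ) : Prop :=
  (∀ k < n, 1 ≤ a k ∧ a k < b k) ∧ ∀ k, k + 1 < n → b k ≤ a (k + 1)

/-! If `2⁻ⁿ⁻¹ < x ≤ 2⁻ⁿ`, then `n + 1` halvings of `t` land below `tx`, so the Δ₂-condition gives
`F(t) ≤ Δⁿ⁺¹ F(tx)`, and `Δⁿ = (2ⁿ)^r ≤ x^{-r}` for `r = log₂ Δ`: thus `F_t(x) ≥ Δ⁻¹ x^r` for all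
`t > 0`. On each link `w(b_k) − w(a_k) ≥ F_{b_k}(x) − C₀ F_{a_k}(x) > F_{b_k}(x)/2 ≥ Δ⁻¹ x^r / 2`,
and along the chain these increments of the increasing `w` add up to at most `sup w − w(1)`. -/

section DeltaTwo

variable {F : ℝ → ℝ} {Δ : ℝ}

lemma pos_of_strictMonoOn (hF0 : F 0 = 0) (hmono : StrictMonoOn F (Ici 0)) {t : ℝ}
    (ht : 0 < t) : 0 < F t :=
  hF0 ▸ hmono self_mem_Ici ht.le ht

lemma one_lt_of_two_mul_le (hF0 : F 0 = 0) (hmono : StrictMonoOn F (Ici 0))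
    (hΔ : ∀ x ≥ (0 : ℝ), F (2 * x) ≤ Δ * F x) : 1 < Δ := by
  have h12 : F 1 < F 2 := hmono (by norm_num) (by norm_num) (by norm_num)
  have h2 : F 2 ≤ Δ * F 1 := by simpa using hΔ 1 zero_le_one
  nlinarith [pos_of_strictMonoOn hF0 hmono one_pos]

lemma le_pow_mul_div_two_pow (hΔ0 : 0 ≤ Δ) (hΔ : ∀ x ≥ (0 : ℝ), F (2 * x) ≤ Δ * F x)
    (m : ℕ) {t : ℝ} (ht : 0 ≤ t) : F t ≤ Δ ^ m * F (t / 2 ^ m) := by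
  induction m with
  | zero => simp
  | succ m ih =>
    have hstep : F (t / 2 ^ m) ≤ Δ * F (t / 2 ^ (m + 1)) := by
      convert hΔ (t / 2 ^ (m + 1)) (by positivity) using 2
      ring
    calc F t ≤ Δ ^ m * F (t / 2 ^ m) := ih
      _ ≤ Δ ^ m * (Δ * F (t / 2 ^ (m + 1))) := by gcongr
      _ = Δ ^ (m + 1) * F (t / 2 ^ (m + 1)) := by ring

lemma inv_mul_rpow_logb_le_Ft (hmono : MonotoneOn F (Ici 0)) (hpos : ∀ t > 0, 0 < F t)
    (hΔ1 : 1 ≤ Δ) (hΔ : ∀ x ≥ (0 : ℝ), F (2 * x) ≤ Δ * F x) {t x : ℝ} (ht : 0 < t)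
    (hx0 : 0 < x) (hx1 : x ≤ 1) : Δ⁻¹ * x ^ Real.logb 2 Δ ≤ Ft F t x := by
  set r := Real.logb 2 Δ
  have hΔ0 : 0 < Δ := one_pos.trans_le hΔ1
  obtain ⟨n, hn, hn1⟩ := exists_nat_pow_near (one_le_inv_iff₀.mpr ⟨hx0, hx1⟩) one_lt_two
  have hFt : F t ≤ Δ ^ (n + 1) * F (t * x) := by
    have hle : t / 2 ^ (n + 1) ≤ t * x := by
      rw [div_le_iff₀ (by positivity), mul_assoc]
      refine le_mul_of_one_le_right ht.le ?_
      rw [← inv_mul_le_iff₀ hx0, mul_one]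
      exact hn1.le
    exact (le_pow_mul_div_two_pow hΔ0.le hΔ (n + 1) ht.le).trans <| by
      gcongr
      exact hmono (mem_Ici.mpr (by positivity)) (mem_Ici.mpr (by positivity)) hle
  have hpow : Δ ^ (n + 1) ≤ Δ * (x ^ r)⁻¹ := by
    have hΔn : Δ ^ n = ((2 : ℝ) ^ n) ^ r := by
      rw [← Real.rpow_pow_comm zero_le_two, Real.rpow_logb two_pos (by norm_num) hΔ0]
    rw [pow_succ', hΔn, ← Real.inv_rpow hx0.le]
    gcongr
    exact Real.logb_nonneg one_lt_two hΔ1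
  calc Δ⁻¹ * x ^ r ≤ (Δ ^ (n + 1))⁻¹ := by
        rw [le_inv_comm₀ (by positivity) (by positivity), mul_inv, inv_inv]
        exact hpow
    _ ≤ Ft F t x := by
        rw [Ft, le_div_iff₀ (hpos t ht), inv_mul_le_iff₀ (by positivity)]
        exact hFt

end DeltaTwo

namespace OrlChain

variable {a b : ℕ → ℝ} {n : ℕ} {w : ℝ → ℝ} {ε : ℝ}

lemma one_le_right (hchain : OrlChain a b n) {k : ℕ} (hk : k < n) : 1 ≤ b k :=
  (hchain.1 k hk).1.trans (hchain.1 k hk).2.le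

lemma add_mul_le_of_monotoneOn (hchain : OrlChain a b n) (hw : MonotoneOn w (Ici 1))
    (hinc : ∀ k < n, w (a k) + ε ≤ w (b k)) :
    ∀ k < n, w 1 + (k + 1) * ε ≤ w (b k) := by
  intro k hk
  induction k with
  | zero =>
    have ha : w 1 ≤ w (a 0) := hw self_mem_Ici (hchain.1 0 hk).1 (hchain.1 0 hk).1
    rw [Nat.cast_zero, zero_add, one_mul]
    linarith [hinc 0 hk]
  | succ k ih =>
    have hba : w (b k) ≤ w (a (k + 1)) :=
      hw (hchain.one_le_right (by omega)) (hchain.1 (k + 1) hk).1 (hchain.2 k hk)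
    push_cast
    linarith [ih (by omega), hinc (k + 1) hk]

lemma mul_le_sub_of_monotoneOn (hchain : OrlChain a b n) (hw : MonotoneOn w (Ici 1))
    {M : ℝ} (hM : ∀ t ≥ 1, w t ≤ M) (hinc : ∀ k < n, w (a k) + ε ≤ w (b k)) :
    n * ε ≤ M - w 1 := by
  cases n with
  | zero => simpa using hM 1 le_rfl
  | succ m =>
    have := hchain.add_mul_le_of_monotoneOn hw hinc m m.lt_succ_self
    push_cast
    linarith [hM (b m) (hchain.one_le_right m.lt_succ_self)]

end OrlChain

theorem chain_count_of_weight_general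
    (F : ℝ → ℝ) (hF0 : F 0 = 0)
    (hmono : StrictMonoOn F (Ici 0))
    (Δ : ℝ) (hΔ : ∀ x ≥ (0 : ℝ), F (2 * x) ≤ Δ * F x)
    (w : ℝ → ℝ) (hw : MonotoneOn w (Ici 1)) (hwb : BddAbove (w '' Ici 1))
    (C₀ : ℝ)
    (hwF : ∀ s t : ℝ, 1 ≤ s → s ≤ t → ∀ x ∈ Icc (0 : ℝ) 1,
      Ft F t x ≤ C₀ * Ft F s x + w t - w s) :
    ∃ C₂ > (1 : ℝ), ∃ r > (0 : ℝ), ∀ x ∈ Ioc (0 : ℝ) 1,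
      ∀ (n : ℕ) (a b : ℕ → ℝ), OrlChain a b n →
      (∀ k < n, 2 * C₀ * Ft F (a k) x < Ft F (b k) x) → (n : ℝ) ≤ C₂ * x ^ (-r) := by
  have hΔ1 := one_lt_of_two_mul_le hF0 hmono hΔ
  obtain ⟨M, hM⟩ := hwb
  have hMw : ∀ t ≥ 1, w t ≤ M := fun t ht => hM ⟨t, ht, rfl⟩
  have hM1 := hMw 1 le_rfl
  refine ⟨2 * Δ * (M - w 1) + 2, by nlinarith, Real.logb 2 Δ, Real.logb_pos one_lt_two hΔ1, ?_⟩
  rintro x ⟨hx0, hx1⟩ n a b hchain hlink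
  set ε := Δ⁻¹ * x ^ Real.logb 2 Δ
  have hlow : ∀ t ≥ 1, ε ≤ Ft F t x := fun t ht =>
    inv_mul_rpow_logb_le_Ft hmono.monotoneOn (fun _ => pos_of_strictMonoOn hF0 hmono) hΔ1.le
      hΔ (one_pos.trans_le ht) hx0 hx1
  have hinc : ∀ k < n, w (a k) + ε / 2 ≤ w (b k) := by
    intro k hk
    obtain ⟨ha, hab⟩ := hchain.1 k hk
    linarith [hwF (a k) (b k) ha hab.le x ⟨hx0.le, hx1⟩, hlink k hk,
      hlow (b k) (hchain.one_le_right hk)]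
  have hcount := hchain.mul_le_sub_of_monotoneOn hw hMw hinc
  have hΔ0 : 0 < Δ := one_pos.trans hΔ1
  rw [Real.rpow_neg hx0.le, ← div_eq_mul_inv, le_div_iff₀ (by positivity)]
  calc (n : ℝ) * x ^ Real.logb 2 Δ = 2 * Δ * (n * (ε / 2)) := by simp only [ε]; field_simp
    _ ≤ 2 * Δ * (M - w 1) := by gcongr
    _ ≤ 2 * Δ * (M - w 1) + 2 := by linarith

/-- If `F_t(x) ≤ C₀ F_s(x) + w(t) − w(s)` for a bounded increasing weight `w`, then
the number of chain links with `F_{b_k}(x) > 2C₀ F_{a_k}(x)` is at most `C₂ x^{−r}`. -/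
theorem chain_count_of_weight
    (F : ℝ → ℝ) (hF0 : F 0 = 0)
    (hmono : StrictMonoOn F (Ici 0)) (hcont : ContinuousOn F (Ici 0))
    (hconv : ConvexOn ℝ (Ici 0) F)
    (Δ : ℝ) (hΔ : ∀ x ≥ (0 : ℝ), F (2 * x) ≤ Δ * F x)
    (w : ℝ → ℝ) (hw : MonotoneOn w (Ici 1)) (hwb : BddAbove (w '' Ici 1))
    (C₀ : ℝ)
    (hwF : ∀ s t : ℝ, 1 ≤ s → s ≤ t → ∀ x ∈ Icc (0 : ℝ) 1,
      Ft F t x ≤ C₀ * Ft F s x + w t - w s) :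
    ∃ C₂ > (1 : ℝ), ∃ r > (0 : ℝ), ∀ x ∈ Ioc (0 : ℝ) 1,
      ∀ (n : ℕ) (a b : ℕ → ℝ), OrlChain a b n →
      (∀ k < n, 2 * C₀ * Ft F (a k) x < Ft F (b k) x) → (n : ℝ) ≤ C₂ * x ^ (-r) :=
  chain_count_of_weight_general F hF0 hmono Δ hΔ w hw hwb C₀ hwF
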